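/- The line S_ε^+ = {(v, w) : v ≥ 0, w = (1+ε)(v + I)} is invariant under the flow of the system v' = v - w + I, w' = -ε w, in the sense that if a solution starts on this line with v(0) ≥ 0, then it remains on the line w = (1+ε)(v + I) for as long as v(t) ≥ 0. -/

import Mathlib

/-!
Along any solution the defect `g = w - (1 + ε)(v + I)` from the line satisfies `g' = g`,
so `g t = g 0 · eᵗ`; since the solution starts on the line, `g` vanishes identically.
-/

open Real

theorem eq_mul_exp_of_hasDerivAt_eq_mul {f : ℝ → ℝ} {c : ℝ}
    (hf : ∀ t, HasDerivAt f (c * f t) t) (t : ℝ) : f t = f 0 * exp (c * t) := by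
  have hdamped : ∀ s, HasDerivAt (fun s => f s * exp (-(c * s))) 0 s := fun s => by
    have h := (hf s).mul (((hasDerivAt_id s).const_mul c).neg.exp)
    refine h.congr_deriv ?_
    simp only [id, mul_one]
    ring
  have hconst := is_const_of_deriv_eq_zero (fun s => (hdamped s).differentiableAt)
    (fun s => (hdamped s).deriv) t 0
  simp only [mul_zero, neg_zero, exp_zero, mul_one] at hconst
  rw [← hconst, mul_assoc, ← exp_add, neg_add_cancel, exp_zero, mul_one]

theorem hasDerivAt_slow_manifold_defect {ε I : ℝ} {v w : ℝ → ℝ}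
    (hv : ∀ t, HasDerivAt v (v t - w t + I) t) (hw : ∀ t, HasDerivAt w (-ε * w t) t) (t : ℝ) :
    HasDerivAt (fun t => w t - (1 + ε) * (v t + I))
      (w t - (1 + ε) * (v t + I)) t := by
  refine ((hw t).sub (((hv t).add_const I).const_mul (1 + ε))).congr_deriv ?_
  ring

theorem slow_manifold_plus_invariant_general (ε I : ℝ)
    (v w : ℝ → ℝ)
    (hv : ∀ t, HasDerivAt v (v t - w t + I) t)
    (hw : ∀ t, HasDerivAt w (-ε * w t) t)
    (hw0 : w 0 = (1 + ε) * (v 0 + I)) :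
    ∀ T : ℝ, 0 ≤ T → (∀ t, t ∈ Set.Icc (0 : ℝ) T → 0 ≤ v t) →
      w T = (1 + ε) * (v T + I) := by
  intro T _ _
  have hdefect := eq_mul_exp_of_hasDerivAt_eq_mul (c := 1)
    (fun t => (hasDerivAt_slow_manifold_defect hv hw t).congr_deriv (one_mul _).symm) T
  rw [hw0, sub_self, zero_mul] at hdefect
  exact sub_eq_zero.mp hdefect

/-- The slow manifold S_ε^+ = {v ≥ 0, w = (1+ε)(v+I)} is invariant for
v' = v - w + I, w' = -ε w, as long as v(t) ≥ 0. -/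
theorem slow_manifold_plus_invariant (ε I : ℝ) (hε : 0 < ε)
    (v w : ℝ → ℝ)
    (hv : ∀ t, HasDerivAt v (v t - w t + I) t)
    (hw : ∀ t, HasDerivAt w (-ε * w t) t)
    (hv0 : 0 ≤ v 0) (hw0 : w 0 = (1 + ε) * (v 0 + I)) :
    ∀ T : ℝ, 0 ≤ T → (∀ t, t ∈ Set.Icc (0 : ℝ) T → 0 ≤ v t) →
      w T = (1 + ε) * (v T + I) :=
  slow_manifold_plus_invariant_general ε I v w hv hw hw0
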